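/- arXiv:1308.3036 — 4 statements merged into one kernel-verified Lean document; each statement's English description precedes it below -/
import Mathlib

section
/- Let S = M[G; I, Λ; P] be a central completely simple semigroup with P normalized, N a normal subgroup of G containing all entries of P, H = G/N, and U = M[N; I, Λ; P]. Then the map ν : S → U^H ⋊ H = U ≀ H given by (i,g,λ) ↦ (f_g^{iλ}, gN), where f_g^{iλ} : H → U sends A to (i, A f_g, λ) (with f_g from the Kaloujnine–Krasner embedding), is an injective semigroup homomorphism. Hence every central completely simple extension of U by H embeds in the wreath product U ≀ H. -/
/-- Rees matrix semigroup multiplication on `I × G × Λ` with sandwich matrix `P`. -/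
def reesMul {G I L : Type*} [Mul G] (P : L → I → G) (x y : I × G × L) : I × G × L :=
  (x.1, x.2.1 * P x.2.2 y.1 * y.2.1, y.2.2)

/-- The wreath-product action of `A ∈ H` on a function `f : H → α`: `B(A·f) = (BA)f`. -/
def wAct {H α : Type*} [Mul H] (A : H) (f : H → α) : H → α :=
  fun B => f (B * A)

/-- The Kaloujnine–Krasner map `f_g : H → G`, `A ↦ r_A g r_{A·gN}⁻¹`. -/
def kkMap {G : Type*} [Group G] (N : Subgroup G) [N.Normal]
    (r : G ⧸ N → G) (g : G) : G ⧸ N → G :=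
  fun A => r A * g * (r (A * (g : G ⧸ N)))⁻¹

/-!
The Kaloujnine–Krasner map satisfies the cocycle identity `f_{gh}(A) = f_g(A) f_h(A·gN)`,
for any choice of `r`. A central entry `p ∈ N` of the sandwich matrix leaves the coset `gN`
unchanged and commutes with everything, so `f_{g p h}(A) = f_g(A) p f_h(A·gN)`: this is
exactly the middle coordinate of the wreath product of the images of `(i,g,λ)` and `(j,h,μ)`.
Injectivity holds because `f_g(A) = r_A g r_{A·gN}⁻¹` recovers `g` once `gN` is known.
-/

namespace QuotientGroup

theorem mk_mul_mul_of_mem {G : Type*} [Group G] {N : Subgroup G} [N.Normal]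
    (g h : G) {p : G} (hp : p ∈ N) : ((g * p * h : G) : G ⧸ N) = g * h := by
  rw [mk_mul, mk_mul_of_mem g hp]

end QuotientGroup

namespace kkMap

variable {G : Type*} [Group G] {N : Subgroup G} [N.Normal] (r : G ⧸ N → G)

variable {r} in
theorem mem (hr : ∀ A : G ⧸ N, (r A : G ⧸ N) = A) (g : G) (A : G ⧸ N) :
    kkMap N r g A ∈ N := by
  rw [← QuotientGroup.eq_one_iff]
  simp [kkMap, hr]

theorem mul (g h : G) (A : G ⧸ N) :
    kkMap N r (g * h) A = kkMap N r g A * kkMap N r h (A * g) := by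
  simp only [kkMap, QuotientGroup.mk_mul, mul_assoc, inv_mul_cancel_left]

theorem mul_of_mem_center {z : G} (hzN : z ∈ N) (hz : z ∈ Subgroup.center G)
    (g : G) (A : G ⧸ N) : kkMap N r (g * z) A = kkMap N r g A * z := by
  simp only [kkMap, QuotientGroup.mk_mul_of_mem g hzN, mul_assoc,
    (Subgroup.mem_center_iff.1 hz _).symm]

theorem mul_mul_of_mem_center {z : G} (hzN : z ∈ N) (hz : z ∈ Subgroup.center G)
    (g h : G) (A : G ⧸ N) :
    kkMap N r (g * z * h) A = kkMap N r g A * z * kkMap N r h (A * g) := by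
  rw [mul, mul_of_mem_center r hzN hz, QuotientGroup.mk_mul_of_mem g hzN]

theorem eq_of_mk_eq {g h : G} (hq : (g : G ⧸ N) = h) {A : G ⧸ N}
    (hf : kkMap N r g A = kkMap N r h A) : g = h := by
  simp only [kkMap, hq, mul_left_inj, mul_right_inj] at hf
  exact hf

end kkMap

theorem stmt_15_general {G I L : Type*} [Group G] (P : L → I → G)
    (N : Subgroup G) [N.Normal]
    (hPN : ∀ (l : L) (i : I), P l i ∈ N)
    (hcentral : ∀ (l : L) (i : I), P l i ∈ Subgroup.center G)
    (r : G ⧸ N → G) (hr : ∀ A : G ⧸ N, (r A : G ⧸ N) = A) :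
    letI nu : I × G × L → (G ⧸ N → I × G × L) × (G ⧸ N) :=
      fun x => (fun A => (x.1, kkMap N r x.2.1 A, x.2.2), (x.2.1 : G ⧸ N))
    (∀ (x : I × G × L) (A : G ⧸ N), ((nu x).1 A).2.1 ∈ N) ∧
    Function.Injective nu ∧
    (∀ x y : I × G × L,
      nu (reesMul P x y) =
        ((fun C => reesMul P ((nu x).1 C) ((nu y).1 (C * (nu x).2))),
          (nu x).2 * (nu y).2)) := by
  refine ⟨fun x A => kkMap.mem hr x.2.1 A, ?_, ?_⟩
  · rintro ⟨i, g, l⟩ ⟨j, h, m⟩ heq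
    obtain ⟨hf, hq⟩ := Prod.ext_iff.1 heq
    obtain ⟨rfl, hg, rfl⟩ : i = j ∧ kkMap N r g 1 = kkMap N r h 1 ∧ l = m := by
      simpa using congrFun hf 1
    obtain rfl : g = h := kkMap.eq_of_mk_eq r hq hg
    rfl
  · rintro ⟨i, g, l⟩ ⟨j, h, m⟩
    simp only [reesMul, QuotientGroup.mk_mul_mul_of_mem g h (hPN l j),
      kkMap.mul_mul_of_mem_center r (hPN l j) (hcentral l j)]

/-- Every central completely simple semigroup `S = M[G;I,Λ;P]` (all entries of the
normalized sandwich matrix `P` lie in the centre of `G` and in the normal subgroup `N`)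
which is an extension of `U = M[N;I,Λ;P]` by `H = G/N` embeds in the wreath product
`U ≀ H = U^H ⋊ H`:  the map `ν : (i,g,λ) ↦ (f_g^{iλ}, gN)` with
`f_g^{iλ}(A) = (i, A f_g, λ)` is injective, takes values in `U^H × H`
(middle coordinates in `N`), and is a semigroup homomorphism. -/
theorem stmt_15 {G I L : Type*} [Group G] (P : L → I → G) (i0 : I) (l0 : L)
    (hnorm : (∀ i : I, P l0 i = 1) ∧ (∀ l : L, P l i0 = 1))
    (N : Subgroup G) [N.Normal]
    (hPN : ∀ (l : L) (i : I), P l i ∈ N)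
    (hcentral : ∀ (l : L) (i : I), P l i ∈ Subgroup.center G)
    (r : G ⧸ N → G) (hr : ∀ A : G ⧸ N, (r A : G ⧸ N) = A) (hr1 : r 1 = 1) :
    letI nu : I × G × L → (G ⧸ N → I × G × L) × (G ⧸ N) :=
      fun x => (fun A => (x.1, kkMap N r x.2.1 A, x.2.2), (x.2.1 : G ⧸ N))
    (∀ (x : I × G × L) (A : G ⧸ N), ((nu x).1 A).2.1 ∈ N) ∧
    Function.Injective nu ∧
    (∀ x y : I × G × L,
      nu (reesMul P x y) =
        ((fun C => reesMul P ((nu x).1 C) ((nu y).1 (C * (nu x).2))),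
          (nu x).2 * (nu y).2)) :=
  stmt_15_general P N hPN hcentral r hr
end

section
/- Suppose φ : S → M[N^H; I^H, Λ^H; P^H] ⋊ H is an injective semigroup homomorphism from a Rees matrix semigroup S = M[G; I, Λ; P] (with P normalized, entries of P in the normal subgroup N of G, H = G/N) such that the H-component of (i,g,λ)φ is gN. If p_{λi} is the identity of G, then the map ι_{iλ} : G → N^H ⋊ H, g ↦ (p^H_{ξ_λ η_i} f_g^{iλ}, gN), is an injective group homomorphism, where (i,g,λ)φ = ((η_i, f_g^{iλ}, gN·ξ_λ), gN) with η_i ∈ I^H depending only on i and ξ_λ ∈ Λ^H depending only on λ. -/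
/-- The sandwich matrix `P^H` over `G^H`: `A p^H_{ξη} = p_{Aξ,Aη}`. -/
def sandwichPow {G I L H : Type*} (P : L → I → G) (xi : H → L) (eta : H → I) : H → G :=
  fun A => P (xi A) (eta A)

/-- Multiplication of the semidirect product `M[G^H; I^H, Λ^H; P^H] ⋊ H`
(the Rees-matrix form of the wreath product `M[G;I,Λ;P] ≀ H`). -/
def wreesMul {G I L H : Type*} [Group G] [Group H] (P : L → I → G)
    (X Y : ((H → I) × (H → G) × (H → L)) × H) :
    ((H → I) × (H → G) × (H → L)) × H :=
  ((X.1.1,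
    X.1.2.1 * sandwichPow P X.1.2.2 (wAct X.2 Y.1.1) * wAct X.2 Y.1.2.1,
    wAct X.2 Y.1.2.2), X.2 * Y.2)

/-- Multiplication of the wreath product group `G ≀ H = G^H ⋊ H`. -/
def gwrMul {G H : Type*} [Group G] [Group H] (x y : (H → G) × H) : (H → G) × H :=
  (x.1 * wAct x.2 y.1, x.2 * y.2)

/-! The `H`-class of `S` indexed by `(i, λ)` with `p_{λi} = 1` is a group, and `φ` restricted to it
lands in the `H`-class of `φ(i, 1, λ)` in the wreath product, whose multiplication is
`(f₁, A)(f₂, B) = (f₁ · A·p^H_{ξη} · A·f₂, AB)`. Left multiplication of the first coordinate by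
`p^H_{ξη}` turns this into the multiplication of `N ≀ H`, and it is injective because `φ` is. -/

section

variable {G I L H : Type*}

theorem wAct_sandwichPow [Mul H] {P : L → I → G} (A : H) (xi : H → L) (eta : H → I) :
    wAct A (sandwichPow P xi eta) = sandwichPow P (wAct A xi) (wAct A eta) :=
  rfl

/-- The shape `(i,g,λ) ↦ ((η_i, f_g^{iλ}, gN·ξ_λ), gN)` of `φ`, with `π` in place of `g ↦ gN`. -/
def reesWreathMap [Mul H] (etaI : I → H → I) (xiL : L → H → L) (F : I → L → G → H → G)
    (π : G → H) (x : I × G × L) : ((H → I) × (H → G) × (H → L)) × H :=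
  ((etaI x.1, F x.1 x.2.2 x.2.1, wAct (π x.2.1) (xiL x.2.2)), π x.2.1)

theorem injective_leftMul_of_injective_reesWreathMap [Mul H] [Group G]
    {etaI : I → H → I} {xiL : L → H → L} {F : I → L → G → H → G} {π : G → H}
    (hinj : Function.Injective (reesWreathMap etaI xiL F π)) (c : H → G) (i : I) (l : L) :
    Function.Injective (fun g : G => (c * F i l g, π g)) := by
  intro g h hgh
  have hF : F i l g = F i l h := mul_left_cancel (congrArg Prod.fst hgh)
  have hπ : π g = π h := congrArg Prod.snd hgh
  have := @hinj (i, g, l) (i, h, l) (by simp only [reesWreathMap, hF, hπ])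
  exact congrArg (fun x : I × G × L => x.2.1) this

theorem reesWreathMap_mul_apply [Group G] [Group H]
    {P : L → I → G} {etaI : I → H → I} {xiL : L → H → L} {F : I → L → G → H → G} {π : G → H}
    (hhom : ∀ x y, reesWreathMap etaI xiL F π (reesMul P x y) =
      wreesMul P (reesWreathMap etaI xiL F π x) (reesWreathMap etaI xiL F π y))
    {i : I} {l : L} (hP1 : P l i = 1) (g h : G) :
    F i l (g * h) =
      F i l g * wAct (π g) (sandwichPow P (xiL l) (etaI i)) * wAct (π g) (F i l h) := by
  simpa [reesWreathMap, reesMul, wreesMul, hP1, wAct_sandwichPow] using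
    congrArg (fun X => X.1.2.1) (hhom (i, g, l) (i, h, l))

theorem gwrMul_mul_left [Group G] [Group H] (c f₁ f₂ : H → G) (A B : H) :
    gwrMul (c * f₁, A) (c * f₂, B) = (c * (f₁ * wAct A c * wAct A f₂), A * B) := by
  ext B' <;> simp [gwrMul, wAct, mul_assoc]

end

theorem stmt_16_general {G I L : Type*} [Group G] (P : L → I → G)
    (N : Subgroup G) [N.Normal]
    (etaI : I → (G ⧸ N → I)) (xiL : L → (G ⧸ N → L))
    (F : I → L → G → (G ⧸ N → G))
    (hinj : Function.Injective (fun x : I × G × L =>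
      ((etaI x.1, F x.1 x.2.2 x.2.1, wAct ((x.2.1 : G ⧸ N)) (xiL x.2.2)),
        (x.2.1 : G ⧸ N))))
    (hhom : ∀ x y : I × G × L,
      ((etaI (reesMul P x y).1, F (reesMul P x y).1 (reesMul P x y).2.2 (reesMul P x y).2.1,
          wAct (((reesMul P x y).2.1 : G ⧸ N)) (xiL (reesMul P x y).2.2)),
        ((reesMul P x y).2.1 : G ⧸ N)) =
      wreesMul P
        ((etaI x.1, F x.1 x.2.2 x.2.1, wAct ((x.2.1 : G ⧸ N)) (xiL x.2.2)), (x.2.1 : G ⧸ N))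
        ((etaI y.1, F y.1 y.2.2 y.2.1, wAct ((y.2.1 : G ⧸ N)) (xiL y.2.2)), (y.2.1 : G ⧸ N)))
    (i : I) (l : L) (hP1 : P l i = 1) :
    Function.Injective (fun g : G =>
      ((sandwichPow P (xiL l) (etaI i) * F i l g, (g : G ⧸ N)) : (G ⧸ N → G) × (G ⧸ N))) ∧
    ∀ g h : G,
      ((sandwichPow P (xiL l) (etaI i) * F i l (g * h), ((g * h : G) : G ⧸ N)) :
          (G ⧸ N → G) × (G ⧸ N)) =
        gwrMul (sandwichPow P (xiL l) (etaI i) * F i l g, (g : G ⧸ N))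
          (sandwichPow P (xiL l) (etaI i) * F i l h, (h : G ⧸ N)) := by
  refine ⟨injective_leftMul_of_injective_reesWreathMap hinj _ i l, fun g h => ?_⟩
  rw [gwrMul_mul_left, ← reesWreathMap_mul_apply hhom hP1, QuotientGroup.mk_mul]

/-- Suppose `φ : S = M[G;I,Λ;P] → M[N^H;I^H,Λ^H;P^H] ⋊ H` (with `P` normalized, its
entries in the normal subgroup `N`, `H = G/N`) is an injective semigroup homomorphism
of the form `(i,g,λ)φ = ((η_i, f_g^{iλ}, gN·ξ_λ), gN)` where `η_i` depends only on `i`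
and `ξ_λ` only on `λ`, and the values `f_g^{iλ}` lie in `N^H`.
If `p_{λi} = 1`, then `ι_{iλ} : g ↦ (p^H_{ξ_λ η_i} · f_g^{iλ}, gN)` is an injective
group homomorphism of `G` into the wreath product group `N^H ⋊ H`. -/
theorem stmt_16 {G I L : Type*} [Group G] (P : L → I → G) (i0 : I) (l0 : L)
    (hnorm : (∀ i : I, P l0 i = 1) ∧ (∀ l : L, P l i0 = 1))
    (N : Subgroup G) [N.Normal]
    (hPN : ∀ (l : L) (i : I), P l i ∈ N)
    (etaI : I → (G ⧸ N → I)) (xiL : L → (G ⧸ N → L))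
    (F : I → L → G → (G ⧸ N → G))
    (hFN : ∀ (i : I) (l : L) (g : G) (A : G ⧸ N), F i l g A ∈ N)
    (hinj : Function.Injective (fun x : I × G × L =>
      ((etaI x.1, F x.1 x.2.2 x.2.1, wAct ((x.2.1 : G ⧸ N)) (xiL x.2.2)),
        (x.2.1 : G ⧸ N))))
    (hhom : ∀ x y : I × G × L,
      ((etaI (reesMul P x y).1, F (reesMul P x y).1 (reesMul P x y).2.2 (reesMul P x y).2.1,
          wAct (((reesMul P x y).2.1 : G ⧸ N)) (xiL (reesMul P x y).2.2)),
        ((reesMul P x y).2.1 : G ⧸ N)) =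
      wreesMul P
        ((etaI x.1, F x.1 x.2.2 x.2.1, wAct ((x.2.1 : G ⧸ N)) (xiL x.2.2)), (x.2.1 : G ⧸ N))
        ((etaI y.1, F y.1 y.2.2 y.2.1, wAct ((y.2.1 : G ⧸ N)) (xiL y.2.2)), (y.2.1 : G ⧸ N)))
    (i : I) (l : L) (hP1 : P l i = 1) :
    Function.Injective (fun g : G =>
      ((sandwichPow P (xiL l) (etaI i) * F i l g, (g : G ⧸ N)) : (G ⧸ N → G) × (G ⧸ N))) ∧
    ∀ g h : G,
      ((sandwichPow P (xiL l) (etaI i) * F i l (g * h), ((g * h : G) : G ⧸ N)) :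
          (G ⧸ N → G) × (G ⧸ N)) =
        gwrMul (sandwichPow P (xiL l) (etaI i) * F i l g, (g : G ⧸ N))
          (sandwichPow P (xiL l) (etaI i) * F i l h, (h : G ⧸ N)) :=
  stmt_16_general P N etaI xiL F hinj hhom i l hP1
end

section
/- Let S = M[G; I, Λ; P] with P normalized, N a normal subgroup of G containing all entries of P, and H = G/N. Define V = M[N^H; I, H × Λ; Q] with q_{(B,λ),j} = B·f_{p_{λj}}, and let H act on V by A·(i, f, (B,λ)) = (i, A·f, (AB, λ)). Then this is a well-defined action of H on V by automorphisms, and the semidirect product V ⋊ H is defined. -/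
/-- The sandwich matrix `Q` of `V = M[N^H; I, H × Λ; Q]`:
`q_{(B,λ),j} = B · f_{p_{λj}}`. -/
def sandwichQ {G I L : Type*} [Group G] (N : Subgroup G) [N.Normal]
    (r : G ⧸ N → G) (P : L → I → G) (Bl : (G ⧸ N) × L) (j : I) : G ⧸ N → G :=
  wAct Bl.1 (kkMap N r (P Bl.2 j))

/-- Multiplication of `V = M[N^H; I, H × Λ; Q]`. -/
def vMul {G I L : Type*} [Group G] (N : Subgroup G) [N.Normal]
    (r : G ⧸ N → G) (P : L → I → G)
    (x y : I × (G ⧸ N → G) × ((G ⧸ N) × L)) : I × (G ⧸ N → G) × ((G ⧸ N) × L) :=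
  (x.1, x.2.1 * sandwichQ N r P x.2.2 y.1 * y.2.1, y.2.2)

/-- The action of `A ∈ H` on `V`: `A·(i, f, (B,λ)) = (i, A·f, (AB, λ))`. -/
def vAct {G I L : Type*} [Group G] (N : Subgroup G) [N.Normal] (A : G ⧸ N)
    (x : I × (G ⧸ N → G) × ((G ⧸ N) × L)) : I × (G ⧸ N → G) × ((G ⧸ N) × L) :=
  (x.1, wAct A x.2.1, (A * x.2.2.1, x.2.2.2))

section WreathAction

variable {H α : Type*}

@[simp]
theorem wAct_one [MulOneClass H] (f : H → α) : wAct 1 f = f :=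
  funext fun B => congrArg f (mul_one B)

theorem wAct_mul [Semigroup H] (A B : H) (f : H → α) :
    wAct (B * A) f = wAct B (wAct A f) :=
  funext fun C => congrArg f (mul_assoc C B A).symm

theorem wAct_mul_fun [Mul H] [Mul α] (A : H) (f g : H → α) :
    wAct A (f * g) = wAct A f * wAct A g :=
  rfl

end WreathAction

section KaloujnineKrasner

variable {G : Type*} [Group G] (N : Subgroup G) [N.Normal] (r : G ⧸ N → G)

/-- For `g ∈ N` the coset `A·gN` is `A`, so `f_g A = r_A g r_A⁻¹` is a conjugate of `g`. -/
theorem kkMap_mem {g : G} (hg : g ∈ N) (A : G ⧸ N) : kkMap N r g A ∈ N := by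
  have hg1 : ((g : G) : G ⧸ N) = 1 := (QuotientGroup.eq_one_iff g).2 hg
  simpa only [kkMap, hg1, mul_one] using Subgroup.Normal.conj_mem ‹_› g hg (r A)

variable {I L : Type*} (P : L → I → G)

theorem sandwichQ_mem (hPN : ∀ l i, P l i ∈ N) (Bl : (G ⧸ N) × L) (j : I) (A : G ⧸ N) :
    sandwichQ N r P Bl j A ∈ N :=
  kkMap_mem N r (hPN Bl.2 j) (A * Bl.1)

theorem sandwichQ_mul_fst (A B : G ⧸ N) (l : L) (j : I) :
    sandwichQ N r P (A * B, l) j = wAct A (sandwichQ N r P (B, l) j) :=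
  wAct_mul B A _

theorem vAct_one (x : I × (G ⧸ N → G) × ((G ⧸ N) × L)) : vAct N 1 x = x := by
  simp only [vAct, wAct_one, one_mul]

theorem vAct_mul (A B : G ⧸ N) (x : I × (G ⧸ N → G) × ((G ⧸ N) × L)) :
    vAct N (B * A) x = vAct N B (vAct N A x) := by
  simp only [vAct, wAct_mul, mul_assoc]

theorem vAct_vMul (A : G ⧸ N) (x y : I × (G ⧸ N → G) × ((G ⧸ N) × L)) :
    vAct N A (vMul N r P x y) = vMul N r P (vAct N A x) (vAct N A y) := by
  simp only [vAct, vMul, wAct_mul_fun, sandwichQ_mul_fst]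

end KaloujnineKrasner

theorem stmt_18_general {G I L : Type*} [Group G] (P : L → I → G)
    (N : Subgroup G) [N.Normal] (hPN : ∀ (l : L) (i : I), P l i ∈ N)
    (r : G ⧸ N → G) :
    (∀ (Bl : (G ⧸ N) × L) (j : I) (A : G ⧸ N), sandwichQ N r P Bl j A ∈ N) ∧
    (∀ x : I × (G ⧸ N → G) × ((G ⧸ N) × L), vAct N 1 x = x) ∧
    (∀ (A B : G ⧸ N) (x : I × (G ⧸ N → G) × ((G ⧸ N) × L)),
      vAct N (B * A) x = vAct N B (vAct N A x)) ∧
    (∀ (A : G ⧸ N) (x y : I × (G ⧸ N → G) × ((G ⧸ N) × L)),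
      vAct N A (vMul N r P x y) = vMul N r P (vAct N A x) (vAct N A y)) :=
  ⟨sandwichQ_mem N r P hPN, vAct_one N, vAct_mul N, vAct_vMul N r P⟩

/-- Let `S = M[G;I,Λ;P]` with `P` normalized, `N ⊴ G` containing all entries of `P`,
`H = G/N`, and `V = M[N^H; I, H × Λ; Q]` with `q_{(B,λ),j} = B·f_{p_{λj}}`.  Then the
entries of `Q` lie in `N^H`, and `A·(i,f,(B,λ)) = (i, A·f, (AB,λ))` is a well-defined
action of `H` on `V` by automorphisms (identity, composition, multiplicativity),
so the semidirect product `V ⋊ H` is defined. -/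
theorem stmt_18 {G I L : Type*} [Group G] (P : L → I → G) (i0 : I) (l0 : L)
    (hnorm : (∀ i : I, P l0 i = 1) ∧ (∀ l : L, P l i0 = 1))
    (N : Subgroup G) [N.Normal] (hPN : ∀ (l : L) (i : I), P l i ∈ N)
    (r : G ⧸ N → G) (hr : ∀ A : G ⧸ N, (r A : G ⧸ N) = A) (hr1 : r 1 = 1) :
    (∀ (Bl : (G ⧸ N) × L) (j : I) (A : G ⧸ N), sandwichQ N r P Bl j A ∈ N) ∧
    (∀ x : I × (G ⧸ N → G) × ((G ⧸ N) × L), vAct N 1 x = x) ∧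
    (∀ (A B : G ⧸ N) (x : I × (G ⧸ N → G) × ((G ⧸ N) × L)),
      vAct N (B * A) x = vAct N B (vAct N A x)) ∧
    (∀ (A : G ⧸ N) (x y : I × (G ⧸ N → G) × ((G ⧸ N) × L)),
      vAct N A (vMul N r P x y) = vMul N r P (vAct N A x) (vAct N A y)) :=
  stmt_18_general P N hPN r
end

section
/- Any completely simple semigroup S which is an extension of a completely simple semigroup U by a group H embeds into a semidirect product V ⋊ H, where V is a completely simple semigroup whose maximal subgroups are direct powers (indexed by H) of the maximal subgroups of U. Concretely, writing S = M[G; I, Λ; P] with P normalized, N ⊴ G containing all entries of P, H = G/N, U = M[N; I, Λ; P], and V = M[N^H; I, H × Λ; Q] with q_{(B,λ),j} = B·f_{p_{λj}} and action A·(i,f,(B,λ)) = (i, A·f, (AB,λ)), the map ψ : S → V ⋊ H, (i,g,λ) ↦ ((i, f_g, (gN, λ)), gN), is an injective semigroup homomorphism. -/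
/-- Multiplication of the semidirect product `V ⋊ H`: `(v,A)(w,B) = (v·(A·w), AB)`. -/
def vsdMul {G I L : Type*} [Group G] (N : Subgroup G) [N.Normal]
    (r : G ⧸ N → G) (P : L → I → G)
    (x y : (I × (G ⧸ N → G) × ((G ⧸ N) × L)) × (G ⧸ N)) :
    (I × (G ⧸ N → G) × ((G ⧸ N) × L)) × (G ⧸ N) :=
  (vMul N r P x.1 (vAct N x.2 y.1), x.2 * y.2)

section KaloujnineKrasner

variable {G : Type*} [Group G] (N : Subgroup G) [N.Normal] (r : G ⧸ N → G)

theorem kkMap_mul (g h : G) :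
    kkMap N r (g * h) = kkMap N r g * wAct (g : G ⧸ N) (kkMap N r h) := by
  funext A
  simp only [kkMap, wAct, Pi.mul_apply, QuotientGroup.mk_mul, mul_assoc]
  group

theorem kkMap_apply_mem (hr : ∀ A : G ⧸ N, (r A : G ⧸ N) = A) (g : G) (A : G ⧸ N) :
    kkMap N r g A ∈ N := by
  rw [← QuotientGroup.eq_one_iff, kkMap, QuotientGroup.mk_mul, QuotientGroup.mk_mul,
    QuotientGroup.mk_inv, hr, hr]
  group

theorem kkMap_apply_one (hr1 : r 1 = 1) (g : G) : kkMap N r g 1 = g * (r g)⁻¹ := by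
  simp only [kkMap, hr1, one_mul]

theorem eq_of_kkMap_eq (hr1 : r 1 = 1) {g h : G} (hf : kkMap N r g = kkMap N r h)
    (hgh : (g : G ⧸ N) = h) : g = h := by
  have h1 := congrFun hf 1
  rwa [kkMap_apply_one N r hr1, kkMap_apply_one N r hr1, hgh, mul_left_inj] at h1

theorem mk_mul_mul_of_mem {p : G} (hp : p ∈ N) (g h : G) :
    ((g * p * h : G) : G ⧸ N) = g * h := by
  rw [QuotientGroup.mk_mul, QuotientGroup.mk_mul, (QuotientGroup.eq_one_iff p).2 hp, mul_one]

theorem kkMap_mul_mul_of_mem {p : G} (hp : p ∈ N) (g h : G) :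
    kkMap N r (g * p * h) =
      kkMap N r g * wAct (g : G ⧸ N) (kkMap N r p) * wAct (g : G ⧸ N) (kkMap N r h) := by
  have hgp : ((g * p : G) : G ⧸ N) = g := by simpa using mk_mul_mul_of_mem N hp g 1
  rw [kkMap_mul, kkMap_mul, hgp]

end KaloujnineKrasner

theorem stmt_19_general {G I L : Type*} [Group G] (P : L → I → G)
    (N : Subgroup G) [N.Normal] (hPN : ∀ (l : L) (i : I), P l i ∈ N)
    (r : G ⧸ N → G) (hr : ∀ A : G ⧸ N, (r A : G ⧸ N) = A) (hr1 : r 1 = 1) :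
    letI psi : I × G × L → (I × (G ⧸ N → G) × ((G ⧸ N) × L)) × (G ⧸ N) :=
      fun x => ((x.1, kkMap N r x.2.1, ((x.2.1 : G ⧸ N), x.2.2)), (x.2.1 : G ⧸ N))
    (∀ (x : I × G × L) (A : G ⧸ N), (psi x).1.2.1 A ∈ N) ∧
    Function.Injective psi ∧
    (∀ x y : I × G × L, psi (reesMul P x y) = vsdMul N r P (psi x) (psi y)) := by
  refine ⟨fun x => kkMap_apply_mem N r hr x.2.1, ?_, ?_⟩
  · rintro ⟨i, g, l⟩ ⟨j, h, m⟩ heq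
    simp only [Prod.mk.injEq] at heq
    obtain ⟨⟨rfl, hf, hgh, rfl⟩, -⟩ := heq
    rw [eq_of_kkMap_eq N r hr1 hf hgh]
  · rintro ⟨i, g, l⟩ ⟨j, h, m⟩
    simp only [reesMul, vsdMul, vMul, vAct, sandwichQ, mk_mul_mul_of_mem N (hPN l j),
      kkMap_mul_mul_of_mem N r (hPN l j)]

/-- Any extension `S = M[G;I,Λ;P]` (with `P` normalized, `N ⊴ G` containing all entries
of `P`, `H = G/N`) of the completely simple semigroup `U = M[N;I,Λ;P]` by the group `H`
embeds into the semidirect product `V ⋊ H`, where `V = M[N^H; I, H × Λ; Q]` is a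
completely simple semigroup whose maximal subgroups are direct powers `N^H` of the
maximal subgroups `N` of `U`: concretely, the map
`ψ : (i,g,λ) ↦ ((i, f_g, (gN, λ)), gN)` is injective, takes its middle coordinate
values in `N`, and is a semigroup homomorphism. -/
theorem stmt_19 {G I L : Type*} [Group G] (P : L → I → G) (i0 : I) (l0 : L)
    (hnorm : (∀ i : I, P l0 i = 1) ∧ (∀ l : L, P l i0 = 1))
    (N : Subgroup G) [N.Normal] (hPN : ∀ (l : L) (i : I), P l i ∈ N)
    (r : G ⧸ N → G) (hr : ∀ A : G ⧸ N, (r A : G ⧸ N) = A) (hr1 : r 1 = 1) :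
    letI psi : I × G × L → (I × (G ⧸ N → G) × ((G ⧸ N) × L)) × (G ⧸ N) :=
      fun x => ((x.1, kkMap N r x.2.1, ((x.2.1 : G ⧸ N), x.2.2)), (x.2.1 : G ⧸ N))
    (∀ (x : I × G × L) (A : G ⧸ N), (psi x).1.2.1 A ∈ N) ∧
    Function.Injective psi ∧
    (∀ x y : I × G × L, psi (reesMul P x y) = vsdMul N r P (psi x) (psi y)) :=
  stmt_19_general P N hPN r hr hr1
end
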